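/- Let A be a formula all of whose variables and constants lie in V ∪ {0} (i.e., A contains no occurrence of the constant ⊥), and take P = {⊥}. Then ⊢_{{⊥}} ;A (the {⊥}-sequent with empty antecedent, empty body and stoup A is derivable in ML_{{⊥}}) if and only if ⊢_LJ A. -/

import Mathlib

/-- Formulas of ML_P: `F ::= 0 | ⊥ | X | F∧F | F∨F | F→F` with variables from `V`. -/
inductive Fml (V : Type) : Type where
  | zero : Fml V
  | bot : Fml V
  | var : V → Fml V
  | and : Fml V → Fml V → Fml V
  | or : Fml V → Fml V → Fml V
  | imp : Fml V → Fml V → Fml V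

/-- All formulas of the sequent `Γ ⊢ Δ;Ξ` belong to the set `S`. -/
def SeqIn {V : Type} (S : Set (Fml V)) (Γ Δ : Multiset (Fml V)) (Ξ : Option (Fml V)) : Prop :=
  (∀ A ∈ Γ, A ∈ S) ∧ (∀ A ∈ Δ, A ∈ S) ∧ (∀ A ∈ Ξ, A ∈ S)

/-- Derivability of the `P`-sequent `Γ ⊢ Δ;Ξ` in the system ML_P, where additionally
every sequent occurring in the derivation is required to consist of formulas of `S`
(take `S := Set.univ` for plain derivability), and the cut rules `cut₁`, `cut₂` are
allowed only when the flag `cut` is `true`. -/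
inductive MLPG {V : Type} (P S : Set (Fml V)) (cut : Bool) :
    Multiset (Fml V) → Multiset (Fml V) → Option (Fml V) → Prop where
  | ax (A : Fml V) : SeqIn S {A} 0 (some A) → MLPG P S cut {A} 0 (some A)
  | cut1 {Γ Γ' Δ Δ' : Multiset (Fml V)} {A : Fml V} {Ξ : Option (Fml V)} :
      cut = true → SeqIn S (Γ + Γ') (Δ + Δ') Ξ →
      MLPG P S cut Γ Δ (some A) → MLPG P S cut (Γ' + {A}) Δ' Ξ →
      MLPG P S cut (Γ + Γ') (Δ + Δ') Ξ
  | cut2 {Γ Γ' Δ Δ' : Multiset (Fml V)} {A : Fml V} {Ξ : Option (Fml V)} :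
      cut = true → SeqIn S (Γ + Γ') (Δ + Δ') Ξ →
      MLPG P S cut Γ (Δ + {A}) Ξ → MLPG P S cut (Γ' + {A}) Δ' none →
      MLPG P S cut (Γ + Γ') (Δ + Δ') Ξ
  | der {Γ Δ : Multiset (Fml V)} {A : Fml V} :
      A ∈ P → SeqIn S Γ (Δ + {A}) none →
      MLPG P S cut Γ Δ (some A) → MLPG P S cut Γ (Δ + {A}) none
  | cl {Γ Δ : Multiset (Fml V)} {A : Fml V} {Ξ : Option (Fml V)} :
      SeqIn S (Γ + {A}) Δ Ξ →
      MLPG P S cut (Γ + {A, A}) Δ Ξ → MLPG P S cut (Γ + {A}) Δ Ξ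
  | cr {Γ Δ : Multiset (Fml V)} {A : Fml V} {Ξ : Option (Fml V)} :
      SeqIn S Γ (Δ + {A}) Ξ →
      MLPG P S cut Γ (Δ + {A, A}) Ξ → MLPG P S cut Γ (Δ + {A}) Ξ
  | wl {Γ Δ : Multiset (Fml V)} {A : Fml V} {Ξ : Option (Fml V)} :
      SeqIn S (Γ + {A}) Δ Ξ →
      MLPG P S cut Γ Δ Ξ → MLPG P S cut (Γ + {A}) Δ Ξ
  | wr {Γ Δ : Multiset (Fml V)} {A : Fml V} {Ξ : Option (Fml V)} :
      A ∈ P → SeqIn S Γ (Δ + {A}) Ξ →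
      MLPG P S cut Γ Δ Ξ → MLPG P S cut Γ (Δ + {A}) Ξ
  | zeroL {Γ Δ : Multiset (Fml V)} {Ξ : Option (Fml V)} :
      (∀ A ∈ Δ, A ∈ P) → SeqIn S (Γ + {Fml.zero}) Δ Ξ →
      MLPG P S cut (Γ + {Fml.zero}) Δ Ξ
  | botL : SeqIn S {Fml.bot} 0 none → MLPG P S cut {Fml.bot} 0 none
  | and1L {Γ Δ : Multiset (Fml V)} {A B C : Fml V} :
      A ∉ P → B ∉ P → SeqIn S (Γ + {Fml.and A B}) Δ (some C) →
      MLPG P S cut (Γ + {A, B}) Δ (some C) →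
      MLPG P S cut (Γ + {Fml.and A B}) Δ (some C)
  | and2L {Γ Δ : Multiset (Fml V)} {A B : Fml V} :
      SeqIn S (Γ + {Fml.and A B}) Δ none →
      MLPG P S cut (Γ + {A, B}) Δ none →
      MLPG P S cut (Γ + {Fml.and A B}) Δ none
  | and1R {Γ Γ' Δ Δ' : Multiset (Fml V)} {A B : Fml V} :
      SeqIn S (Γ + Γ') (Δ + Δ') (some (Fml.and A B)) →
      MLPG P S cut Γ Δ (some A) → MLPG P S cut Γ' Δ' (some B) →
      MLPG P S cut (Γ + Γ') (Δ + Δ') (some (Fml.and A B))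
  | and2R {Γ Γ' Δ Δ' : Multiset (Fml V)} {A B : Fml V} :
      SeqIn S (Γ + Γ') (Δ + Δ') (some (Fml.and A B)) →
      MLPG P S cut Γ (Δ + {A}) none → MLPG P S cut Γ' (Δ' + {B}) none →
      MLPG P S cut (Γ + Γ') (Δ + Δ') (some (Fml.and A B))
  | and3R {Γ Γ' Δ Δ' : Multiset (Fml V)} {A B : Fml V} :
      SeqIn S (Γ + Γ') (Δ + Δ') (some (Fml.and A B)) →
      MLPG P S cut Γ Δ (some A) → MLPG P S cut Γ' (Δ' + {B}) none →
      MLPG P S cut (Γ + Γ') (Δ + Δ') (some (Fml.and A B))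
  | and4R {Γ Γ' Δ Δ' : Multiset (Fml V)} {A B : Fml V} :
      SeqIn S (Γ + Γ') (Δ + Δ') (some (Fml.and A B)) →
      MLPG P S cut Γ (Δ + {A}) none → MLPG P S cut Γ' Δ' (some B) →
      MLPG P S cut (Γ + Γ') (Δ + Δ') (some (Fml.and A B))
  | or1L {Γ Δ : Multiset (Fml V)} {A B C : Fml V} :
      A ∉ P → B ∉ P → SeqIn S (Γ + {Fml.or A B}) Δ (some C) →
      MLPG P S cut (Γ + {A}) Δ (some C) → MLPG P S cut (Γ + {B}) Δ (some C) →
      MLPG P S cut (Γ + {Fml.or A B}) Δ (some C)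
  | or2L {Γ Δ : Multiset (Fml V)} {A B : Fml V} :
      SeqIn S (Γ + {Fml.or A B}) Δ none →
      MLPG P S cut (Γ + {A}) Δ none → MLPG P S cut (Γ + {B}) Δ none →
      MLPG P S cut (Γ + {Fml.or A B}) Δ none
  | or1R {Γ Δ : Multiset (Fml V)} {A B : Fml V} :
      SeqIn S Γ Δ (some (Fml.or A B)) →
      MLPG P S cut Γ Δ (some A) → MLPG P S cut Γ Δ (some (Fml.or A B))
  | or2R {Γ Δ : Multiset (Fml V)} {A B : Fml V} :
      SeqIn S Γ Δ (some (Fml.or A B)) →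
      MLPG P S cut Γ Δ (some B) → MLPG P S cut Γ Δ (some (Fml.or A B))
  | or3R {Γ Δ : Multiset (Fml V)} {A B : Fml V} :
      SeqIn S Γ Δ (some (Fml.or A B)) →
      MLPG P S cut Γ (Δ + {A}) none → MLPG P S cut Γ Δ (some (Fml.or A B))
  | or4R {Γ Δ : Multiset (Fml V)} {A B : Fml V} :
      SeqIn S Γ Δ (some (Fml.or A B)) →
      MLPG P S cut Γ (Δ + {B}) none → MLPG P S cut Γ Δ (some (Fml.or A B))
  | imp1L {Γ Γ' Δ Δ' : Multiset (Fml V)} {A B C : Fml V} :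
      B ∉ P → SeqIn S (Γ + Γ' + {Fml.imp A B}) (Δ + Δ') (some C) →
      MLPG P S cut (Γ + {B}) Δ (some C) → MLPG P S cut Γ' Δ' (some A) →
      MLPG P S cut (Γ + Γ' + {Fml.imp A B}) (Δ + Δ') (some C)
  | imp2L {Γ Γ' Δ Δ' : Multiset (Fml V)} {A B : Fml V} :
      SeqIn S (Γ + Γ' + {Fml.imp A B}) (Δ + Δ') none →
      MLPG P S cut (Γ + {B}) Δ none → MLPG P S cut Γ' Δ' (some A) →
      MLPG P S cut (Γ + Γ' + {Fml.imp A B}) (Δ + Δ') none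
  | imp3L {Γ Γ' Δ Δ' : Multiset (Fml V)} {A B : Fml V} {Ξ : Option (Fml V)} :
      SeqIn S (Γ + Γ' + {Fml.imp A B}) (Δ + Δ') Ξ →
      MLPG P S cut (Γ + {B}) Δ none → MLPG P S cut Γ' (Δ' + {A}) Ξ →
      MLPG P S cut (Γ + Γ' + {Fml.imp A B}) (Δ + Δ') Ξ
  | imp1R {Γ Δ : Multiset (Fml V)} {A B : Fml V} :
      SeqIn S Γ Δ (some (Fml.imp A B)) →
      MLPG P S cut (Γ + {A}) Δ (some B) → MLPG P S cut Γ Δ (some (Fml.imp A B))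
  | imp2R {Γ Δ : Multiset (Fml V)} {A B : Fml V} :
      SeqIn S Γ Δ (some (Fml.imp A B)) →
      MLPG P S cut (Γ + {A}) (Δ + {B}) none → MLPG P S cut Γ Δ (some (Fml.imp A B))

/-- `Γ ⊢_P Δ;Ξ` : the `P`-sequent `Γ ⊢ Δ;Ξ` is derivable in ML_P. -/
def MLPDer {V : Type} (P : Set (Fml V)) (Γ Δ : Multiset (Fml V)) (Ξ : Option (Fml V)) : Prop :=
  MLPG P Set.univ true Γ Δ Ξ

/-- `VarsOK W zeroOK botOK A` : every propositional variable of `A` lies in `W`,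
the constant `0` occurs in `A` only if `zeroOK`, and `⊥` occurs only if `botOK`. -/
def VarsOK {V : Type} (W : Set V) (zeroOK botOK : Prop) : Fml V → Prop
  | Fml.zero => zeroOK
  | Fml.bot => botOK
  | Fml.var x => x ∈ W
  | Fml.and A B => VarsOK W zeroOK botOK A ∧ VarsOK W zeroOK botOK B
  | Fml.or A B => VarsOK W zeroOK botOK A ∧ VarsOK W zeroOK botOK B
  | Fml.imp A B => VarsOK W zeroOK botOK A ∧ VarsOK W zeroOK botOK B

/-- The intuitionistic sequent calculus LJ (a multiset on the left, one formula on
the right), with `0` as its absurdity constant. -/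
inductive LJ {V : Type} : Multiset (Fml V) → Fml V → Prop where
  | ax (A : Fml V) : LJ {A} A
  | cut {Γ Γ' : Multiset (Fml V)} {A B : Fml V} :
      LJ Γ A → LJ (Γ' + {A}) B → LJ (Γ + Γ') B
  | cl {Γ : Multiset (Fml V)} {A B : Fml V} :
      LJ (Γ + {A, A}) B → LJ (Γ + {A}) B
  | wl {Γ : Multiset (Fml V)} {A B : Fml V} :
      LJ Γ B → LJ (Γ + {A}) B
  | zeroL {Γ : Multiset (Fml V)} {A : Fml V} : LJ (Γ + {Fml.zero}) A
  | andL {Γ : Multiset (Fml V)} {A B C : Fml V} :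
      LJ (Γ + {A, B}) C → LJ (Γ + {Fml.and A B}) C
  | andR {Γ Γ' : Multiset (Fml V)} {A B : Fml V} :
      LJ Γ A → LJ Γ' B → LJ (Γ + Γ') (Fml.and A B)
  | orL {Γ : Multiset (Fml V)} {A B C : Fml V} :
      LJ (Γ + {A}) C → LJ (Γ + {B}) C → LJ (Γ + {Fml.or A B}) C
  | orR1 {Γ : Multiset (Fml V)} {A B : Fml V} :
      LJ Γ A → LJ Γ (Fml.or A B)
  | orR2 {Γ : Multiset (Fml V)} {A B : Fml V} :
      LJ Γ B → LJ Γ (Fml.or A B)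
  | impL {Γ Γ' : Multiset (Fml V)} {A B C : Fml V} :
      LJ (Γ + {B}) C → LJ Γ' A → LJ (Γ + Γ' + {Fml.imp A B}) C
  | impR {Γ : Multiset (Fml V)} {A B : Fml V} :
      LJ (Γ + {A}) B → LJ Γ (Fml.imp A B)

/-!
Replace `⊥` by `0` everywhere. Since `P = {⊥}`, the body of an ML-sequent only ever holds
`⊥`, i.e. `0` after translation, so `Γ ⊢ Δ;Π` can be read as the LJ-sequent `Γ ⊢ Π`, an empty
stoup standing for `0`; every rule that moves a formula into or out of the body then becomes an
ex falso step in LJ. Conversely, a translated formula is never `⊥`, so the side conditions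
`A ∉ P` of the stoup rules ∧¹ₗ, ∨¹ₗ, →¹ₗ hold, and an LJ-derivation becomes an ML-derivation
with empty body. A `⊥`-free formula is its own translation.
-/

variable {V : Type}

namespace Fml

@[simp]
def botToZero : Fml V → Fml V
  | zero => zero
  | bot => zero
  | var x => var x
  | and A B => and A.botToZero B.botToZero
  | or A B => or A.botToZero B.botToZero
  | imp A B => imp A.botToZero B.botToZero

lemma botToZero_notMem_singleton_bot (A : Fml V) : A.botToZero ∉ ({bot} : Set (Fml V)) := by
  cases A <;> simp

lemma botToZero_eq_self {A : Fml V} (h : VarsOK Set.univ True False A) : A.botToZero = A := by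
  induction A with
  | zero | var x => rfl
  | bot => exact h.elim
  | and A B ihA ihB | or A B ihA ihB | imp A B ihA ihB => simp [ihA h.1, ihB h.2]

@[simp]
def stoupBotToZero : Option (Fml V) → Fml V
  | none => zero
  | some A => A.botToZero

end Fml

lemma seqIn_univ (Γ Δ : Multiset (Fml V)) (Ξ : Option (Fml V)) : SeqIn Set.univ Γ Δ Ξ :=
  ⟨fun _ _ => trivial, fun _ _ => trivial, fun _ _ => trivial⟩

namespace LJ

lemma weaken_right {Γ : Multiset (Fml V)} {B : Fml V} (Γ' : Multiset (Fml V)) (h : LJ Γ B) :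
    LJ (Γ + Γ') B := by
  induction Γ' using Multiset.induction with
  | empty => simpa using h
  | cons a s ih =>
    rw [Multiset.add_cons, ← Multiset.singleton_add, add_comm]
    exact ih.wl

lemma exfalso {Γ : Multiset (Fml V)} (C : Fml V) (h : LJ Γ Fml.zero) : LJ Γ C := by
  simpa using h.cut (Γ' := 0) zeroL

end LJ

open Fml

theorem MLPG.toLJ {S : Set (Fml V)} {cut : Bool} {Γ Δ : Multiset (Fml V)}
    {Ξ : Option (Fml V)} (h : MLPG {bot} S cut Γ Δ Ξ) :
    LJ (Γ.map botToZero) (stoupBotToZero Ξ) := by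
  induction h with
  | ax A => simpa using LJ.ax A.botToZero
  | cut1 _ _ _ _ ih₁ ih₂ => simpa using ih₁.cut (by simpa using ih₂)
  | cut2 _ _ _ _ ih₁ => simpa using ih₁.weaken_right _
  | der hP _ _ ih => simpa [Set.mem_singleton_iff.mp hP] using ih
  | cl _ _ ih => simpa using LJ.cl (by simpa using ih)
  | cr _ _ ih | wr _ _ _ ih => exact ih
  | wl _ _ ih => simpa using ih.wl
  | zeroL => simpa using LJ.zeroL
  | botL => simpa using LJ.zeroL (Γ := 0)
  | and1L _ _ _ _ ih | and2L _ _ ih => simpa using LJ.andL (by simpa using ih)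
  | and1R _ _ _ ih₁ ih₂ => simpa using ih₁.andR ih₂
  | and2R _ _ _ ih₁ ih₂ => simpa using (ih₁.exfalso _).andR (ih₂.exfalso _)
  | and3R _ _ _ ih₁ ih₂ => simpa using ih₁.andR (ih₂.exfalso _)
  | and4R _ _ _ ih₁ ih₂ => simpa using (ih₁.exfalso _).andR ih₂
  | or1L _ _ _ _ _ ih₁ ih₂ | or2L _ _ _ ih₁ ih₂ =>
    simpa using LJ.orL (by simpa using ih₁) (by simpa using ih₂)
  | or1R _ _ ih => simpa using ih.orR1
  | or2R _ _ ih => simpa using ih.orR2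
  | or3R _ _ ih => simpa using (ih.exfalso _).orR1
  | or4R _ _ ih => simpa using (ih.exfalso _).orR2
  | imp1L _ _ _ _ ih₁ ih₂ => simpa using LJ.impL (by simpa using ih₁) ih₂
  | imp2L _ _ _ ih₁ ih₂ => simpa using LJ.impL (C := zero) (by simpa using ih₁) ih₂
  | @imp3L Γ Γ' _ _ A B _ _ _ _ _ ih₂ =>
    have := ih₂.weaken_right (Γ.map botToZero + {(imp A B).botToZero})
    simpa [add_comm, add_left_comm, add_assoc] using this
  | imp1R _ _ ih => simpa using LJ.impR (by simpa using ih)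
  | imp2R _ _ ih => simpa using LJ.impR ((by simpa using ih : LJ _ zero).exfalso _)

theorem LJ.toMLPG {Γ : Multiset (Fml V)} {B : Fml V} (h : LJ Γ B) :
    MLPG {bot} Set.univ true (Γ.map botToZero) 0 (some B.botToZero) := by
  have hnb := botToZero_notMem_singleton_bot (V := V)
  induction h with
  | ax A => simpa using MLPG.ax A.botToZero (seqIn_univ _ _ _)
  | cut _ _ ih₁ ih₂ =>
    simpa using MLPG.cut1 (Δ := 0) (Δ' := 0) rfl (seqIn_univ _ _ _) ih₁ (by simpa using ih₂)
  | cl _ ih => simpa using MLPG.cl (Δ := 0) (seqIn_univ _ _ _) (by simpa using ih)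
  | wl _ ih => simpa using MLPG.wl (Δ := 0) (seqIn_univ _ _ _) ih
  | zeroL => simpa using MLPG.zeroL (Δ := 0) (by simp) (seqIn_univ _ _ _)
  | andL _ ih => simpa using MLPG.and1L (hnb _) (hnb _) (seqIn_univ _ _ _) (by simpa using ih)
  | andR _ _ ih₁ ih₂ => simpa using MLPG.and1R (Δ := 0) (Δ' := 0) (seqIn_univ _ _ _) ih₁ ih₂
  | orL _ _ ih₁ ih₂ =>
    simpa using MLPG.or1L (hnb _) (hnb _) (seqIn_univ _ _ _) (by simpa using ih₁)
      (by simpa using ih₂)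
  | orR1 _ ih => simpa using MLPG.or1R (seqIn_univ _ _ _) ih
  | orR2 _ ih => simpa using MLPG.or2R (seqIn_univ _ _ _) ih
  | impL _ _ ih₁ ih₂ =>
    simpa using MLPG.imp1L (Δ := 0) (Δ' := 0) (hnb _) (seqIn_univ _ _ _) (by simpa using ih₁) ih₂
  | impR _ ih => simpa using MLPG.imp1R (seqIn_univ _ _ _) (by simpa using ih)

/-- If `A` is a formula without the constant `⊥` and `P = {⊥}`, then
`⊢_{⊥} ;A` iff `⊢_LJ A`. -/
theorem lj_coding_formula {V : Type} (A : Fml V) (hA : VarsOK Set.univ True False A) :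
    MLPDer ({Fml.bot} : Set (Fml V)) 0 0 (some A) ↔ LJ (0 : Multiset (Fml V)) A := by
  constructor
  · intro h
    simpa [botToZero_eq_self hA] using MLPG.toLJ h
  · intro h
    simpa [botToZero_eq_self hA, MLPDer] using h.toMLPG
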